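/- Fix an integer n ≥ 2, set b := -n + i, and let D ⊆ {0, 1, …, n²} be such that Δ := D − D is sparse. Let (α_j)_{j≥1} be a sequence with α_j ∈ Δ for all j, set α := π((α_j)), and let C(α) := C_{n,D} ∩ (C_{n,D} + α). Suppose there exists β = π((β_j)) with β_j ∈ D ∩ (D + α_j) for all j such that the sequence of sets ((D ∩ (D + α_j)) − β_j)_{j≥1} is strongly eventually periodic with data: a positive integer p and nonempty finite subsets A_1, …, A_p and U_1, …, U_p of ℤ satisfying (D ∩ (D + α_ℓ)) − β_ℓ = A_ℓ for 1 ≤ ℓ ≤ p and (D ∩ (D + α_j)) − β_j = A_ℓ + U_ℓ whenever j > p and j ≡ ℓ (mod p). Then C(α) = ⋃ f_{a,u}(C(α)), where the union is over all tuples (a_1, …, a_p) and (u_1, …, u_p) with a_ℓ ∈ A_ℓ and u_ℓ ∈ U_ℓ for each ℓ, and f_{a,u}(x) := b^{-p}(x + Σ_{ℓ=1}^p (a_ℓ b^{p−ℓ} + u_ℓ b^{−ℓ}) − β) + β. In particular, C(α) is self-similar. -/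

import Mathlib

open Complex Filter Pointwise

/-- `piSum b d = ∑_{j≥1} d_j b^{-j}` (0-indexed: `d j` is the `(j+1)`-st digit). -/
noncomputable def piSum (b : ℂ) (d : ℕ → ℤ) : ℂ :=
  ∑' j : ℕ, (d j : ℂ) * b ^ (-((j : ℤ) + 1))

/-- The restricted digit set `C_{n,D}`. -/
def restrictedDigitSet (n : ℕ) (D : Set ℤ) : Set ℂ :=
  {z | ∃ d : ℕ → ℤ, (∀ j, d j ∈ D) ∧ z = piSum (-(n : ℂ) + Complex.I) d}

/-- `Δ` is sparse: all distinct pairs differ by more than `2` when `n ≥ 5`,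
and by more than `3` when `n ∈ {2, 3, 4}`. -/
def Sparse (n : ℕ) (Δ : Set ℤ) : Prop :=
  ∀ δ ∈ Δ, ∀ δ' ∈ Δ, δ ≠ δ' →
    (5 ≤ n → 2 < |δ - δ'|) ∧ (n = 2 ∨ n = 3 ∨ n = 4 → 3 < |δ - δ'|)

/-! The sparseness of `Δ` makes expansions in `C(α)` unique in the relevant sense: if
`π(d) = π(d') + π(α)` with digits in `D`, then `c := d - d' - α` has digits that vanish or have
absolute value at least `3` (at least `4` when `n ≤ 4`), and `π(c) = 0`. For `b = -n + i` this
forces `c = 0`: the tails `T_m = ∑_j c_{j+m} b^{-j-1}` satisfy `T_0 = 0` and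
`T_{m+1} = b T_m - c_m`, hence are Gaussian integers of modulus at most
`2n² / (|b| - 1) = 2(|b| + 1)`, while a first nonzero digit pushes them out of this disc within
five steps. So `C(α) = π(β) + K`, where `K` is the set of expansions with `j`-th digit in
`S_j = (D ∩ (D + α_j)) - β_j`. Splitting an element of `K` after its first `p` digits, and each
digit `j ∈ [p, 2p)` as `a + u ∈ A_{j-p} + U_{j-p}`, writes `K` as `⋃ g_{a,u}(K)`; and `f_{a,u}`
is `g_{a,u}` conjugated by the translation by `π(β)`. -/

open Finset

section Expansion

variable {b : ℂ}

lemma hasSum_geometric_bound (hb : 1 < ‖b‖) (M : ℝ) :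
    HasSum (fun j : ℕ => M * ‖b‖⁻¹ * ‖b‖⁻¹ ^ j) (M / (‖b‖ - 1)) := by
  have h := (hasSum_geometric_of_lt_one (by positivity) (inv_lt_one_of_one_lt₀ hb)).mul_left
    (M * ‖b‖⁻¹)
  rwa [mul_assoc, ← mul_inv, mul_sub, mul_one, mul_inv_cancel₀ (by positivity),
    ← div_eq_mul_inv] at h

lemma norm_digit_mul_zpow_le (hb : 1 < ‖b‖) {d : ℕ → ℤ} {M : ℤ} (hd : ∀ j, |d j| ≤ M) (j : ℕ) :
    ‖(d j : ℂ) * b ^ (-((j : ℤ) + 1))‖ ≤ M * ‖b‖⁻¹ * ‖b‖⁻¹ ^ j := by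
  have hdj : |(d j : ℝ)| ≤ M := by exact_mod_cast hd j
  rw [norm_mul, Complex.norm_intCast, norm_zpow, neg_add, zpow_add₀ (by positivity), zpow_neg,
    zpow_natCast, zpow_neg_one, inv_pow]
  calc _ ≤ (M : ℝ) * ((‖b‖ ^ j)⁻¹ * ‖b‖⁻¹) := by gcongr
    _ = _ := by ring

lemma summable_of_abs_le (hb : 1 < ‖b‖) {d : ℕ → ℤ} {M : ℤ} (hd : ∀ j, |d j| ≤ M) :
    Summable fun j : ℕ => (d j : ℂ) * b ^ (-((j : ℤ) + 1)) :=
  .of_norm_bounded (hasSum_geometric_bound hb M).summable (norm_digit_mul_zpow_le hb hd)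

lemma norm_piSum_le (hb : 1 < ‖b‖) {d : ℕ → ℤ} {M : ℤ} (hd : ∀ j, |d j| ≤ M) :
    ‖piSum b d‖ ≤ M / (‖b‖ - 1) :=
  tsum_of_norm_bounded (hasSum_geometric_bound hb M) (norm_digit_mul_zpow_le hb hd)

lemma piSum_neg (d : ℕ → ℤ) : piSum b (-d) = -piSum b d := by
  rw [piSum, piSum, ← tsum_neg]
  exact tsum_congr fun j => by push_cast [Pi.neg_apply]; ring

lemma piSum_add {d e : ℕ → ℤ} (hd : Summable fun j : ℕ => (d j : ℂ) * b ^ (-((j : ℤ) + 1)))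
    (he : Summable fun j : ℕ => (e j : ℂ) * b ^ (-((j : ℤ) + 1))) :
    piSum b (d + e) = piSum b d + piSum b e := by
  rw [piSum, piSum, piSum, ← hd.tsum_add he]
  exact tsum_congr fun j => by push_cast [Pi.add_apply]; ring

lemma piSum_sub {d e : ℕ → ℤ} (hd : Summable fun j : ℕ => (d j : ℂ) * b ^ (-((j : ℤ) + 1)))
    (he : Summable fun j : ℕ => (e j : ℂ) * b ^ (-((j : ℤ) + 1))) :
    piSum b (d - e) = piSum b d - piSum b e := by
  rw [piSum, piSum, piSum, ← hd.tsum_sub he]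
  exact tsum_congr fun j => by push_cast [Pi.sub_apply]; ring

lemma piSum_eq_sum_range_add_shift (hb : b ≠ 0) {d : ℕ → ℤ}
    (hd : Summable fun j : ℕ => (d j : ℂ) * b ^ (-((j : ℤ) + 1))) (p : ℕ) :
    piSum b d = ∑ j ∈ range p, (d j : ℂ) * b ^ (-((j : ℤ) + 1)) +
      b ^ (-(p : ℤ)) * piSum b (fun j => d (j + p)) := by
  rw [piSum, ← hd.sum_add_tsum_nat_add p, piSum, ← tsum_mul_left]
  congr 1
  refine tsum_congr fun j => ?_
  rw [show -(((j + p : ℕ) : ℤ) + 1) = -(p : ℤ) + -((j : ℤ) + 1) by push_cast; ring,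
    zpow_add₀ hb]
  ring

lemma piSum_shift_one (hb : b ≠ 0) {d : ℕ → ℤ}
    (hd : Summable fun j : ℕ => (d j : ℂ) * b ^ (-((j : ℤ) + 1))) :
    piSum b (fun j => d (j + 1)) = b * piSum b d - d 0 := by
  rw [piSum_eq_sum_range_add_shift hb hd 1, range_one, sum_singleton]
  simp only [Nat.cast_zero, Nat.cast_one, zero_add, zpow_neg_one]
  field_simp
  ring

lemma piSum_shift_eq_zero (hb : b ≠ 0) {d : ℕ → ℤ}
    (hd : Summable fun j : ℕ => (d j : ℂ) * b ^ (-((j : ℤ) + 1))) (h0 : piSum b d = 0) {m : ℕ}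
    (hm : ∀ j < m, d j = 0) : piSum b (fun j => d (j + m)) = 0 := by
  rw [piSum_eq_sum_range_add_shift hb hd m,
    sum_eq_zero fun j hj => by simp [hm j (mem_range.mp hj)], zero_add] at h0
  exact (mul_eq_zero.mp h0).resolve_left (zpow_ne_zero _ hb)

end Expansion

section SelfSimilarity

variable {b : ℂ} {p : ℕ}

def expansionSet (b : ℂ) (S : ℕ → Set ℤ) : Set ℂ :=
  {z | ∃ e : ℕ → ℤ, (∀ j, e j ∈ S j) ∧ z = piSum b e}

def prepend (a : Fin p → ℤ) (e : ℕ → ℤ) (j : ℕ) : ℤ :=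
  if h : j < p then a ⟨j, h⟩ else e (j - p)

lemma prepend_add (a : Fin p → ℤ) (e : ℕ → ℤ) (j : ℕ) : prepend a e (j + p) = e j := by
  simp [prepend]

lemma summable_prepend (hb : b ≠ 0) (a : Fin p → ℤ) {e : ℕ → ℤ}
    (he : Summable fun j : ℕ => (e j : ℂ) * b ^ (-((j : ℤ) + 1))) :
    Summable fun j : ℕ => (prepend a e j : ℂ) * b ^ (-((j : ℤ) + 1)) := by
  refine (summable_nat_add_iff p).mp ((he.mul_left (b ^ (-(p : ℤ)))).congr fun j => ?_)
  rw [prepend_add, show -(((j + p : ℕ) : ℤ) + 1) = -(p : ℤ) + -((j : ℤ) + 1) by push_cast; ring,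
    zpow_add₀ hb]
  ring

lemma piSum_prepend (hb : b ≠ 0) (a : Fin p → ℤ) {e : ℕ → ℤ}
    (he : Summable fun j : ℕ => (e j : ℂ) * b ^ (-((j : ℤ) + 1))) :
    piSum b (prepend a e) =
      ∑ ℓ : Fin p, (a ℓ : ℂ) * b ^ (-((ℓ : ℤ) + 1)) + b ^ (-(p : ℤ)) * piSum b e := by
  rw [piSum_eq_sum_range_add_shift hb (summable_prepend hb a he) p,
    ← Fin.sum_univ_eq_sum_range (fun j => (prepend a e j : ℂ) * b ^ (-((j : ℤ) + 1)))]
  simp [prepend]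

/-- The similarity `f_{a,u}` of the theorem, conjugated by the translation by `π(β)`. -/
noncomputable def similarity (b : ℂ) (a u : Fin p → ℤ) (y : ℂ) : ℂ :=
  b ^ (-(p : ℤ)) * (y + ∑ ℓ : Fin p,
    ((a ℓ : ℂ) * b ^ ((p : ℤ) - ((ℓ : ℤ) + 1)) + (u ℓ : ℂ) * b ^ (-((ℓ : ℤ) + 1))))

lemma similarity_piSum (hb : b ≠ 0) (a u : Fin p → ℤ) {e : ℕ → ℤ}
    (he : Summable fun j : ℕ => (e j : ℂ) * b ^ (-((j : ℤ) + 1))) :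
    similarity b a u (piSum b e) = piSum b (prepend a (e + prepend u 0)) := by
  have hu : Summable fun j : ℕ => (prepend u 0 j : ℂ) * b ^ (-((j : ℤ) + 1)) :=
    summable_prepend hb u (by simp)
  have hpiu : piSum b (prepend u 0) = ∑ ℓ : Fin p, (u ℓ : ℂ) * b ^ (-((ℓ : ℤ) + 1)) := by
    simpa [piSum] using piSum_prepend hb u (e := 0) (by simp)
  rw [piSum_prepend hb a (he.add hu |>.congr fun j => by push_cast [Pi.add_apply]; ring),
    piSum_add he hu, hpiu, similarity, sum_add_distrib, mul_add, mul_add, mul_sum (s := univ)]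
  have : ∀ ℓ : Fin p, b ^ (-(p : ℤ)) * ((a ℓ : ℂ) * b ^ ((p : ℤ) - ((ℓ : ℤ) + 1))) =
      (a ℓ : ℂ) * b ^ (-((ℓ : ℤ) + 1)) := fun ℓ => by
    rw [mul_left_comm, ← zpow_add₀ hb]; ring_nf
  simp only [this]
  ring

lemma prepend_mem {S : ℕ → Set ℤ} {a : Fin p → ℤ} {e : ℕ → ℤ} (ha : ∀ ℓ : Fin p, a ℓ ∈ S ℓ)
    (he : ∀ k, e k ∈ S (k + p)) (j : ℕ) : prepend a e j ∈ S j := by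
  unfold prepend
  split_ifs with h
  · exact ha ⟨j, h⟩
  · simpa [Nat.sub_add_cancel (not_lt.mp h)] using he (j - p)

lemma eq_prepend_shift (e : ℕ → ℤ) : e = prepend (fun ℓ : Fin p => e ℓ) (fun k => e (k + p)) := by
  funext j
  unfold prepend
  split_ifs with h
  · rfl
  · simp [Nat.sub_add_cancel (not_lt.mp h)]

theorem expansionSet_eq_iUnion_image_similarity (hb : 1 < ‖b‖) {S : ℕ → Set ℤ} {M : ℤ}
    (hS : ∀ j, ∀ x ∈ S j, |x| ≤ M) {A U : ℕ → Set ℤ} (hA : ∀ ℓ < p, S ℓ = A ℓ)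
    (hAU : ∀ j, p ≤ j → S j = A (j % p) + U (j % p)) :
    expansionSet b S = ⋃ a : Fin p → ℤ, ⋃ u : Fin p → ℤ,
      ⋃ (_ : ∀ ℓ : Fin p, a ℓ ∈ A ℓ ∧ u ℓ ∈ U ℓ), similarity b a u '' expansionSet b S := by
  have hb0 : b ≠ 0 := norm_pos_iff.mp (by linarith)
  have hsum {e : ℕ → ℤ} (he : ∀ j, e j ∈ S j) :
      Summable fun j : ℕ => (e j : ℂ) * b ^ (-((j : ℤ) + 1)) :=
    summable_of_abs_le hb fun j => hS j _ (he j)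
  have hS_lt {k : ℕ} (hk : k < p) : S (k + p) = A k + U k := by
    rw [hAU _ (by omega), Nat.add_mod_right, Nat.mod_eq_of_lt hk]
  have hS_ge {k : ℕ} (hk : p ≤ k) : S (k + p) = S k := by
    rw [hAU _ (by omega), hAU _ hk, Nat.add_mod_right]
  ext z
  simp only [Set.mem_iUnion, Set.mem_image]
  constructor
  · rintro ⟨e, he, rfl⟩
    have hsplit (ℓ : Fin p) : ∃ a' u', a' ∈ A ℓ ∧ u' ∈ U ℓ ∧ a' + u' = e (ℓ + p) := by
      obtain ⟨a', ha', u', hu', h⟩ := Set.mem_add.mp (hS_lt ℓ.isLt ▸ he (ℓ + p))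
      exact ⟨a', u', ha', hu', h⟩
    choose a' u ha' hu hau using hsplit
    set e' : ℕ → ℤ := (fun k => e (k + p)) - prepend u 0
    have he' (k : ℕ) : e' k ∈ S k := by
      by_cases hk : k < p
      · have := hau ⟨k, hk⟩
        simp only [e', Pi.sub_apply, prepend, dif_pos hk]
        rw [hA k hk, ← this, add_sub_cancel_right]
        exact ha' ⟨k, hk⟩
      · simpa [e', prepend, dif_neg hk, hS_ge (not_lt.mp hk)] using he (k + p)
    refine ⟨fun ℓ => e ℓ, u, fun ℓ => ⟨hA ℓ ℓ.isLt ▸ he ℓ, hu ℓ⟩, piSum b e', ⟨e', he', rfl⟩, ?_⟩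
    rw [similarity_piSum hb0 _ _ (hsum he'), sub_add_cancel, ← eq_prepend_shift]
  · rintro ⟨a, u, hau, _, ⟨e, he, rfl⟩, rfl⟩
    refine ⟨_, prepend_mem (fun ℓ => hA ℓ ℓ.isLt ▸ (hau ℓ).1) fun k => ?_,
      similarity_piSum hb0 a u (hsum he)⟩
    by_cases hk : k < p
    · simpa [prepend, dif_pos hk, hS_lt hk] using
        Set.add_mem_add (hA k hk ▸ he k) (hau ⟨k, hk⟩).2
    · simpa [prepend, dif_neg hk, hS_ge (not_lt.mp hk)] using he k

lemma mem_add_singleton_iff_sub_mem {s : Set ℤ} {a x : ℤ} : x ∈ s + {a} ↔ x - a ∈ s := by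
  simp [sub_eq_add_neg]

lemma mem_sub_singleton_iff_add_mem {s : Set ℤ} {a x : ℤ} : x ∈ s - {a} ↔ x + a ∈ s := by
  simp only [Set.sub_singleton, Set.mem_image]
  exact ⟨by rintro ⟨y, hy, rfl⟩; simpa using hy, fun h => ⟨_, h, add_sub_cancel_right x a⟩⟩

lemma expansionSet_eq_image_add_piSum (hb : 1 < ‖b‖) {S : ℕ → Set ℤ} {M : ℤ}
    (hS : ∀ j, ∀ x ∈ S j, |x| ≤ M) {β : ℕ → ℤ} {N : ℤ} (hβ : ∀ j, |β j| ≤ N) :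
    expansionSet b S = (· + piSum b β) '' expansionSet b fun j => S j - {β j} := by
  ext z
  constructor
  · rintro ⟨m, hm, rfl⟩
    refine ⟨piSum b (m - β),
      ⟨m - β, fun j => mem_sub_singleton_iff_add_mem.mpr (by simpa using hm j), rfl⟩, ?_⟩
    dsimp only
    rw [piSum_sub (summable_of_abs_le hb fun j => hS j _ (hm j)) (summable_of_abs_le hb hβ),
      sub_add_cancel]
  · rintro ⟨_, ⟨e, he, rfl⟩, rfl⟩
    have he' (j : ℕ) : |e j| ≤ M + N := by
      have := hS j _ (mem_sub_singleton_iff_add_mem.mp (he j)); have := hβ j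
      rw [abs_le] at *; omega
    refine ⟨e + β, fun j => mem_sub_singleton_iff_add_mem.mp (he j), ?_⟩
    rw [piSum_add (summable_of_abs_le hb he') (summable_of_abs_le hb hβ)]

end SelfSimilarity

section Base

lemma norm_base_sq (n : ℕ) : ‖-(n : ℂ) + I‖ ^ 2 = n ^ 2 + 1 := by
  rw [show -(n : ℂ) + I = ((-n : ℝ) : ℂ) + ((1 : ℝ) : ℂ) * I by push_cast; ring, Complex.sq_norm,
    Complex.normSq_add_mul_I]
  ring

variable {n : ℕ}

lemma one_lt_norm_base (hn : 1 ≤ n) : 1 < ‖-(n : ℂ) + I‖ := by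
  have hn' : (1 : ℝ) ≤ n := by exact_mod_cast hn
  nlinarith [norm_base_sq n, norm_nonneg (-(n : ℂ) + I)]

lemma norm_base_le (hn : 1 ≤ n) : ‖-(n : ℂ) + I‖ ≤ n + 1 / 2 := by
  have hn' : (1 : ℝ) ≤ n := by exact_mod_cast hn
  nlinarith [norm_base_sq n, norm_nonneg (-(n : ℂ) + I)]

/-- `x + y i = T_m`, where `T_0 = 0` and `T_{m+1} = (-n + i) T_m - c_m`. -/
def tailCoords (n : ℤ) (c : ℕ → ℤ) : ℕ → ℤ × ℤ
  | 0 => (0, 0)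
  | m + 1 => (-n * (tailCoords n c m).1 - (tailCoords n c m).2 - c m,
      (tailCoords n c m).1 - n * (tailCoords n c m).2)

lemma piSum_shift_eq_tailCoords (hn : 1 ≤ n) {c : ℕ → ℤ} {M : ℤ} (hc : ∀ j, |c j| ≤ M)
    (h0 : piSum (-(n : ℂ) + I) c = 0) (m : ℕ) :
    piSum (-(n : ℂ) + I) (fun j => c (j + m)) =
      (tailCoords n c m).1 + (tailCoords n c m).2 * I := by
  have hb := one_lt_norm_base hn
  induction m with
  | zero => simpa [tailCoords] using h0
  | succ m ih =>
    have h := piSum_shift_one (norm_pos_iff.mp (by linarith))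
      (summable_of_abs_le hb fun j => hc (j + m))
    simp only [Nat.add_right_comm _ 1 m, ih, zero_add] at h
    simp only [tailCoords, ← add_assoc, h]
    push_cast
    linear_combination ((tailCoords n c m).2 : ℂ) * I_sq

lemma tailCoords_sq_le (hn : 1 ≤ n) {c : ℕ → ℤ} (hc : ∀ j, |c j| ≤ 2 * n ^ 2)
    (h0 : piSum (-(n : ℂ) + I) c = 0) (m : ℕ) :
    (tailCoords n c m).1 ^ 2 + (tailCoords n c m).2 ^ 2 ≤ 4 * n ^ 2 + 8 * n + 12 := by
  set x := (tailCoords n c m).1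
  set y := (tailCoords n c m).2
  have hb := one_lt_norm_base hn
  have hT := norm_piSum_le hb fun j => hc (j + m)
  rw [piSum_shift_eq_tailCoords hn hc h0 m, show (2 * (n : ℤ) ^ 2 : ℤ) / (‖-(n : ℂ) + I‖ - 1) =
    2 * (‖-(n : ℂ) + I‖ + 1) by
      rw [div_eq_iff (by linarith)]; push_cast; linear_combination -2 * norm_base_sq n] at hT
  have hxy : ‖(x : ℂ) + y * I‖ ^ 2 = (x : ℝ) ^ 2 + (y : ℝ) ^ 2 := by
    rw [Complex.sq_norm, ← Complex.normSq_add_mul_I]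
    push_cast
    rfl
  have := norm_base_le hn
  have : (x : ℝ) ^ 2 + (y : ℝ) ^ 2 ≤ 4 * n ^ 2 + 8 * n + 12 := by
    nlinarith [norm_nonneg ((x : ℂ) + y * I), norm_base_sq n]
  exact_mod_cast this

def sparseGap (n : ℕ) : ℤ := if 5 ≤ n then 3 else 4

lemma abs_le_of_sq_le {k a : ℤ} (hk : 1 ≤ k) (h : a ^ 2 ≤ 4 * k ^ 2 + 8 * k + 12) :
    |a| ≤ 2 * k + 2 := by
  have := abs_lt_of_sq_lt_sq (a := a) (b := 2 * k + 3) (by nlinarith) (by omega)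
  omega

/- The `y`'s are the imaginary parts of the tails `T_2, …, T_5` (with `y₂ = d`). For `n ≥ 7`
the bounds give `y₃ ≤ 2 - n` and then `y₄ ≥ n (n - 2) - 2n - 2 > 2n + 2`; the finitely many
remaining `n` are settled by nonlinear arithmetic. -/
lemma false_of_orbit_bounds (hn : 2 ≤ n) {d x₂ x₃ x₄ x₅ y₃ y₄ y₅ : ℤ} (hd : sparseGap n ≤ d)
    (hc : |x₂ + n * d| ≤ 2 * n ^ 2)
    (h₂ : x₂ ^ 2 + d ^ 2 ≤ 4 * n ^ 2 + 8 * n + 12)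
    (h₃ : x₃ ^ 2 + y₃ ^ 2 ≤ 4 * n ^ 2 + 8 * n + 12)
    (h₄ : x₄ ^ 2 + y₄ ^ 2 ≤ 4 * n ^ 2 + 8 * n + 12)
    (h₅ : x₅ ^ 2 + y₅ ^ 2 ≤ 4 * n ^ 2 + 8 * n + 12)
    (hy₃ : y₃ = x₂ - n * d) (hy₄ : y₄ = x₃ - n * y₃) (hy₅ : y₅ = x₄ - n * y₄) : False := by
  have hn' : (1 : ℤ) ≤ n := by exact_mod_cast (by omega : 1 ≤ n)
  have b₂ := abs_le_of_sq_le hn' (by nlinarith : x₂ ^ 2 ≤ _)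
  have b₃ := abs_le_of_sq_le hn' (by nlinarith : x₃ ^ 2 ≤ _)
  have b₄ := abs_le_of_sq_le hn' (by nlinarith : x₄ ^ 2 ≤ _)
  have c₃ := abs_le_of_sq_le hn' (by nlinarith : y₃ ^ 2 ≤ _)
  have c₄ := abs_le_of_sq_le hn' (by nlinarith : y₄ ^ 2 ≤ _)
  have c₅ := abs_le_of_sq_le hn' (by nlinarith : y₅ ^ 2 ≤ _)
  rw [abs_le] at hc b₂ b₃ b₄ c₃ c₄ c₅
  unfold sparseGap at hd
  have hn₆ : n ≤ 6 := by
    by_contra! h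
    have h₇ : (7 : ℤ) ≤ n := by exact_mod_cast h
    have hd₃ : 3 ≤ d := by split_ifs at hd <;> omega
    nlinarith
  subst hy₃ hy₄ hy₅
  obtain rfl | h₅ := eq_or_ne n 5
  · norm_num at hd
    push_cast at *
    obtain rfl : d = 3 := by nlinarith
    obtain rfl : x₂ = 11 := by nlinarith
    nlinarith
  interval_cases n <;> norm_num at hd h₅ <;> push_cast at * <;> nlinarith

lemma false_of_piSum_eq_zero (hn : 2 ≤ n) {c : ℕ → ℤ} (hc : ∀ j, |c j| ≤ 2 * n ^ 2)
    (h0 : piSum (-(n : ℂ) + I) c = 0) (hc₀ : sparseGap n ≤ -c 0) : False := by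
  have h := tailCoords_sq_le (by omega) hc h0
  have hy₂ : (tailCoords n c 2).2 = -c 0 := by simp [tailCoords]
  have hc₁ : (tailCoords n c 2).1 + n * -c 0 = -c 1 := by simp only [tailCoords]; ring
  exact false_of_orbit_bounds hn hc₀ (by rw [hc₁, abs_neg]; exact hc 1) (hy₂ ▸ h 2) (h 3) (h 4)
    (h 5) (by rw [← hy₂]; rfl) rfl rfl

lemma Sparse.sparseGap_le (hn : 2 ≤ n) {Δ : Set ℤ} (h : Sparse n Δ) {δ δ' : ℤ}
    (hδ : δ ∈ Δ) (hδ' : δ' ∈ Δ) (hne : δ ≠ δ') : sparseGap n ≤ |δ - δ'| := by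
  have := h δ hδ δ' hδ' hne
  unfold sparseGap
  split_ifs with h₅
  · have := this.1 h₅; omega
  · have := this.2 (by omega); omega

theorem eq_zero_of_piSum_eq_zero (hn : 2 ≤ n) {c : ℕ → ℤ}
    (hc : ∀ j, |c j| ≤ 2 * n ^ 2) (hgap : ∀ j, c j ≠ 0 → sparseGap n ≤ |c j|)
    (h0 : piSum (-(n : ℂ) + I) c = 0) : c = 0 := by
  have hb := one_lt_norm_base (n := n) (by omega)
  funext j
  induction j using Nat.strong_induction_on with
  | _ j ih =>
  by_contra hj
  have hj' := piSum_shift_eq_zero (norm_pos_iff.mp (by linarith)) (summable_of_abs_le hb hc) h0 ih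
  rcases le_or_gt 0 (c j) with hpos | hneg
  · refine false_of_piSum_eq_zero hn (c := -fun i => c (i + j)) (fun i => by simpa using hc (i + j))
      (by rw [piSum_neg, hj', neg_zero]) ?_
    simpa [abs_of_nonneg hpos] using hgap j hj
  · exact false_of_piSum_eq_zero hn (fun i => hc (i + j)) hj'
      (by simpa [abs_of_neg hneg] using hgap j hj)

theorem restrictedDigitSet_inter_add_singleton (hn : 2 ≤ n) {D : Set ℤ}
    (hD : D ⊆ Set.Icc 0 ((n : ℤ) ^ 2)) (hsparse : Sparse n (D - D)) {α : ℕ → ℤ}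
    (hα : ∀ j, α j ∈ D - D) :
    restrictedDigitSet n D ∩ (restrictedDigitSet n D + {piSum (-(n : ℂ) + I) α}) =
      expansionSet (-(n : ℂ) + I) fun j => D ∩ (D + {α j}) := by
  have hb := one_lt_norm_base (n := n) (by omega)
  have hDb {x : ℤ} (hx : x ∈ D) : |x| ≤ n ^ 2 := (abs_of_nonneg (hD hx).1).trans_le (hD hx).2
  have hDD : ∀ x ∈ D - D, |x| ≤ n ^ 2 := by
    rintro _ ⟨x, hx, y, hy, rfl⟩
    exact abs_sub_le_of_nonneg_of_le (hD hx).1 (hD hx).2 (hD hy).1 (hD hy).2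
  have hsum {d : ℕ → ℤ} (hd : ∀ j, d j ∈ D) := summable_of_abs_le hb fun j => hDb (hd j)
  ext z
  constructor
  · rintro ⟨⟨d, hd, rfl⟩, hz⟩
    obtain ⟨_, ⟨d', hd', rfl⟩, _, rfl, hdd'⟩ := Set.mem_add.mp hz
    have hΔ (j : ℕ) : d j - d' j ∈ D - D := Set.sub_mem_sub (hd j) (hd' j)
    have hc : d - d' - α = 0 := by
      refine eq_zero_of_piSum_eq_zero hn (fun j => ?_) (fun j hj => ?_) ?_
      · have := hDD _ (hΔ j); have := hDD _ (hα j)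
        simp only [Pi.sub_apply]; rw [abs_le] at *; omega
      · exact hsparse.sparseGap_le hn (hΔ j) (hα j) (by simpa [sub_eq_zero] using hj)
      · rw [piSum_sub (d := d - d') (summable_of_abs_le hb fun j => hDD _ (hΔ j))
          (summable_of_abs_le hb fun j => hDD _ (hα j)), piSum_sub (hsum hd) (hsum hd'), ← hdd']
        ring
    refine ⟨d, fun j => ⟨hd j, mem_add_singleton_iff_sub_mem.mpr ?_⟩, rfl⟩
    have := congrFun hc j
    simp only [Pi.sub_apply, Pi.zero_apply] at this
    exact (show d j - α j = d' j by omega) ▸ hd' j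
  · rintro ⟨m, hm, rfl⟩
    have hm' (j : ℕ) : m j - α j ∈ D := mem_add_singleton_iff_sub_mem.mp (hm j).2
    refine ⟨⟨m, fun j => (hm j).1, rfl⟩, Set.mem_add.mpr ⟨_, ⟨m - α, hm', rfl⟩, _, rfl, ?_⟩⟩
    rw [piSum_sub (hsum fun j => (hm j).1) (summable_of_abs_le hb fun j => hDD _ (hα j)),
      sub_add_cancel]

end Base

theorem stmt_19_general (n : ℕ) (hn : 2 ≤ n) (D : Set ℤ)
    (hD : D ⊆ Set.Icc 0 ((n : ℤ) ^ 2))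
    (hsparse : Sparse n (D - D))
    (α : ℕ → ℤ) (hα : ∀ j, α j ∈ D - D)
    (Cα : Set ℂ)
    (hCα : Cα = restrictedDigitSet n D ∩
      (restrictedDigitSet n D + {piSum (-(n : ℂ) + Complex.I) α}))
    (β : ℕ → ℤ) (hβ : ∀ j, β j ∈ D ∩ (D + {α j}))
    (p : ℕ) (A U : ℕ → Set ℤ)
    (hsep₁ : ∀ ℓ < p, (D ∩ (D + {α ℓ})) - {β ℓ} = A ℓ)
    (hsep₂ : ∀ j, p ≤ j → (D ∩ (D + {α j})) - {β j} = A (j % p) + U (j % p)) :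
    Cα = ⋃ a : Fin p → ℤ, ⋃ u : Fin p → ℤ,
      ⋃ (_ : ∀ ℓ : Fin p, a ℓ ∈ A (ℓ : ℕ) ∧ u ℓ ∈ U (ℓ : ℕ)),
      (fun x => (-(n : ℂ) + Complex.I) ^ (-(p : ℤ)) *
        (x + (∑ ℓ : Fin p, ((a ℓ : ℂ) * (-(n : ℂ) + Complex.I) ^ ((p : ℤ) - ((ℓ : ℤ) + 1)) +
          (u ℓ : ℂ) * (-(n : ℂ) + Complex.I) ^ (-((ℓ : ℤ) + 1)))) -
          piSum (-(n : ℂ) + Complex.I) β) +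
        piSum (-(n : ℂ) + Complex.I) β) '' Cα := by
  have hb := one_lt_norm_base (n := n) (by omega)
  have hDb {x : ℤ} (hx : x ∈ D) : |x| ≤ n ^ 2 := (abs_of_nonneg (hD hx).1).trans_le (hD hx).2
  have hE (j : ℕ) (x : ℤ) (hx : x ∈ D ∩ (D + {α j})) : |x| ≤ n ^ 2 := hDb hx.1
  have hS (j : ℕ) (x : ℤ) (hx : x ∈ D ∩ (D + {α j}) - {β j}) : |x| ≤ n ^ 2 := by
    have hx := hD (mem_sub_singleton_iff_add_mem.mp hx).1
    have hβj := hD (hβ j).1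
    simp only [Set.mem_Icc] at hx hβj
    rw [abs_le]; omega
  rw [hCα, restrictedDigitSet_inter_add_singleton hn hD hsparse hα,
    expansionSet_eq_image_add_piSum hb hE fun j => hDb (hβ j).1]
  conv_lhs => rw [expansionSet_eq_iUnion_image_similarity hb hS hsep₁ hsep₂]
  simp only [Set.image_iUnion, Set.image_image]
  refine Set.iUnion_congr fun a => Set.iUnion_congr fun u => Set.iUnion_congr fun _ =>
    Set.image_congr fun y _ => ?_
  simp only [similarity]
  ring

theorem stmt_19 (n : ℕ) (hn : 2 ≤ n) (D : Set ℤ)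
    (hD : D ⊆ Set.Icc 0 ((n : ℤ) ^ 2))
    (hsparse : Sparse n (D - D))
    (α : ℕ → ℤ) (hα : ∀ j, α j ∈ D - D)
    (Cα : Set ℂ)
    (hCα : Cα = restrictedDigitSet n D ∩
      (restrictedDigitSet n D + {piSum (-(n : ℂ) + Complex.I) α}))
    (β : ℕ → ℤ) (hβ : ∀ j, β j ∈ D ∩ (D + {α j}))
    (p : ℕ) (hp : 1 ≤ p) (A U : ℕ → Set ℤ)
    (hAU : ∀ ℓ < p, (A ℓ).Nonempty ∧ (A ℓ).Finite ∧ (U ℓ).Nonempty ∧ (U ℓ).Finite)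
    (hsep₁ : ∀ ℓ < p, (D ∩ (D + {α ℓ})) - {β ℓ} = A ℓ)
    (hsep₂ : ∀ j, p ≤ j → (D ∩ (D + {α j})) - {β j} = A (j % p) + U (j % p)) :
    Cα = ⋃ a : Fin p → ℤ, ⋃ u : Fin p → ℤ,
      ⋃ (_ : ∀ ℓ : Fin p, a ℓ ∈ A (ℓ : ℕ) ∧ u ℓ ∈ U (ℓ : ℕ)),
      (fun x => (-(n : ℂ) + Complex.I) ^ (-(p : ℤ)) *
        (x + (∑ ℓ : Fin p, ((a ℓ : ℂ) * (-(n : ℂ) + Complex.I) ^ ((p : ℤ) - ((ℓ : ℤ) + 1)) +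
          (u ℓ : ℂ) * (-(n : ℂ) + Complex.I) ^ (-((ℓ : ℤ) + 1)))) -
          piSum (-(n : ℂ) + Complex.I) β) +
        piSum (-(n : ℂ) + Complex.I) β) '' Cα :=
  stmt_19_general n hn D hD hsparse α hα Cα hCα β hβ p A U hsep₁ hsep₂
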